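/- Let a, b : ℝ → ℂ be smooth functions such that a(θ + 2π) − a(θ) = 2πi·m and b(θ + 2π) − b(θ) = 2πi·n for all θ, where m, n ∈ ℤ. Then B(a, b) · B(b, a) = 1; that is, Beilinson's monodromy pairing is skew-symmetric. -/

import Mathlib

noncomputable section

/-- Beilinson's monodromy pairing
`B(a,b) = exp{(1/2πi)(∫₀^{2π} a(θ) b'(θ) dθ − 2πi·m_a·b(0))}`,
for logarithm lifts `a`, `b`; here `2πi·m_a = a(2π) − a(0)`. -/
def Bpair (a b : ℝ → ℂ) : ℂ :=
  Complex.exp ((2 * (Real.pi : ℂ) * Complex.I)⁻¹ *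
    ((∫ θ in (0 : ℝ)..(2 * Real.pi), a θ * deriv b θ) - (a (2 * Real.pi) - a 0) * b 0))

theorem stmt_6 (a b : ℝ → ℂ) (m n : ℤ) (ha : ContDiff ℝ (⊤ : ℕ∞) a) (hb : ContDiff ℝ (⊤ : ℕ∞) b)
    (hma : ∀ θ, a (θ + 2 * Real.pi) = a θ + 2 * (Real.pi : ℂ) * Complex.I * (m : ℂ))
    (hnb : ∀ θ, b (θ + 2 * Real.pi) = b θ + 2 * (Real.pi : ℂ) * Complex.I * (n : ℂ)) :
    Bpair a b * Bpair b a = 1 := by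
  have hca : Continuous (deriv a) := ha.continuous_deriv (by simp)
  have hcb : Continuous (deriv b) := hb.continuous_deriv (by simp)
  have hint1 : IntervalIntegrable (fun θ => a θ * deriv b θ) MeasureTheory.volume 0
      (2 * Real.pi) := (ha.continuous.mul hcb).intervalIntegrable _ _
  have hint2 : IntervalIntegrable (fun θ => b θ * deriv a θ) MeasureTheory.volume 0
      (2 * Real.pi) := (hb.continuous.mul hca).intervalIntegrable _ _
  have hparts : (∫ θ in (0:ℝ)..(2 * Real.pi), a θ * deriv b θ)
      + (∫ θ in (0:ℝ)..(2 * Real.pi), b θ * deriv a θ)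
      = a (2 * Real.pi) * b (2 * Real.pi) - a 0 * b 0 := by
    rw [← intervalIntegral.integral_add hint1 hint2]
    have : (∫ θ in (0:ℝ)..(2 * Real.pi), (a θ * deriv b θ + b θ * deriv a θ))
        = a (2 * Real.pi) * b (2 * Real.pi) - a 0 * b 0 := by
      apply intervalIntegral.integral_eq_sub_of_hasDerivAt (f := fun x => a x * b x)
      · intro x _
        have hda : HasDerivAt a (deriv a x) x :=
          (ha.differentiable (by simp) x).hasDerivAt
        have hdb : HasDerivAt b (deriv b x) x :=
          (hb.differentiable (by simp) x).hasDerivAt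
        have := hda.mul hdb
        convert this using 1
        · rfl
        · rfl
        ring
      · exact hint1.add hint2
    simpa using this
  rw [Bpair, Bpair, ← Complex.exp_add]
  have hma' : a (2 * Real.pi) = a 0 + 2 * (Real.pi : ℂ) * Complex.I * (m : ℂ) := by
    simpa using hma 0
  have hnb' : b (2 * Real.pi) = b 0 + 2 * (Real.pi : ℂ) * Complex.I * (n : ℂ) := by
    simpa using hnb 0
  have hc : (2 * (Real.pi : ℂ) * Complex.I) ≠ 0 := by
    simp [Real.pi_ne_zero, Complex.I_ne_zero]
  have key : (2 * (Real.pi : ℂ) * Complex.I)⁻¹ *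
      ((∫ θ in (0:ℝ)..(2 * Real.pi), a θ * deriv b θ) - (a (2 * Real.pi) - a 0) * b 0)
      + (2 * (Real.pi : ℂ) * Complex.I)⁻¹ *
      ((∫ θ in (0:ℝ)..(2 * Real.pi), b θ * deriv a θ) - (b (2 * Real.pi) - b 0) * a 0)
      = ((m * n : ℤ) : ℂ) * (2 * (Real.pi : ℂ) * Complex.I) := by
    have hsum : (∫ θ in (0:ℝ)..(2 * Real.pi), b θ * deriv a θ)
        = a (2 * Real.pi) * b (2 * Real.pi) - a 0 * b 0
          - (∫ θ in (0:ℝ)..(2 * Real.pi), a θ * deriv b θ) := by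
      linear_combination hparts
    rw [hsum, hma', hnb']
    push_cast
    field_simp
    ring
  rw [key, Complex.exp_int_mul_two_pi_mul_I]

end
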